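/- Let $d \ge 1$, $\Delta t > 0$, $g \in \mathbb{R}$, and let $a \in \mathbb{R}^d$ be a fixed vector. Let $W : \Omega \to \mathbb{R}^d$ be a random vector whose coordinates are independent centered real Gaussians with variance $\Delta t$. Then for every real $d \times d$ orthogonal matrix $Q$, $\mathbb{E}\big[\lVert a + g\,(Q - I_d) W \rVert^2\big] = \lVert a \rVert^2 + 2 g^2 \Delta t \cdot \mathrm{tr}(I_d - Q)$. -/

import Mathlib

/-!
Each coordinate of `a + g (Q - I) W` has the form `c + ∑ j, m j * W j`. Since the `W j` are
independent and centred with variance `Δt`, its second moment is `c ^ 2 + Δt ∑ j, m j ^ 2`.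
Summing over coordinates gives `‖a‖² + g² Δt tr(M Mᵀ)` with `M = Q - I`, and orthogonality of `Q`
turns `tr((Q - I)(Q - I)ᵀ) = tr(Q Qᵀ) - 2 tr Q + tr I` into `2 tr(I - Q)`.
-/

open MeasureTheory ProbabilityTheory Matrix NNReal

namespace ProbabilityTheory

variable {Ω : Type*} [MeasurableSpace Ω] {μ : Measure Ω}

lemma HasLaw.of_map_eq {𝓧 : Type*} [MeasurableSpace 𝓧] {X : Ω → 𝓧} {P : Measure 𝓧}
    [NeZero P] (h : μ.map X = P) : HasLaw X P μ :=
  ⟨AEMeasurable.of_map_ne_zero (h ▸ NeZero.ne P), h⟩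

section GaussianReal

variable {X : Ω → ℝ} {m : ℝ} {v : ℝ≥0}

lemma HasLaw.memLp_of_gaussianReal (hX : HasLaw X (gaussianReal m v) μ) (p : ℝ≥0) :
    MemLp X p μ := by
  have h : MemLp id p (μ.map X) := hX.map_eq ▸ memLp_id_gaussianReal p
  exact h.comp_of_map hX.aemeasurable

lemma HasLaw.integral_eq_of_gaussianReal (hX : HasLaw X (gaussianReal m v) μ) : μ[X] = m :=
  hX.integral_eq.trans integral_id_gaussianReal

lemma HasLaw.variance_eq_of_gaussianReal (hX : HasLaw X (gaussianReal m v) μ) :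
    Var[X; μ] = v :=
  hX.variance_eq.trans variance_id_gaussianReal

end GaussianReal

section IndependentCentred

variable [IsProbabilityMeasure μ] {ι : Type*} [Fintype ι] {X : ι → Ω → ℝ}

lemma integral_sq_const_add_sum_mul (hX : ∀ i, MemLp (X i) 2 μ) (hindep : iIndepFun X μ)
    (hmean : ∀ i, μ[X i] = 0) (c : ℝ) (m : ι → ℝ) :
    ∫ ω, (c + ∑ i, m i * X i ω) ^ 2 ∂μ = c ^ 2 + ∑ i, m i ^ 2 * Var[X i; μ] := by
  set mX : ι → Ω → ℝ := fun i ω ↦ m i * X i ω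
  set S : Ω → ℝ := ∑ i, mX i
  have hmX : ∀ i, MemLp (mX i) 2 μ := fun i ↦ (hX i).const_mul (m i)
  have hS : MemLp S 2 μ := memLp_finsetSum' _ fun i _ ↦ hmX i
  have hS_mean : μ[S] = 0 := by
    simp [S, mX, integral_finsetSum _ fun i _ ↦ (hmX i).integrable one_le_two,
      integral_const_mul, hmean]
  have hS_var : Var[S; μ] = ∑ i, m i ^ 2 * Var[X i; μ] := by
    have hpair : Set.Pairwise (Finset.univ : Finset ι) fun i j ↦ mX i ⟂ᵢ[μ] mX j :=
      fun i _ j _ hij ↦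
        (hindep.indepFun hij).comp (measurable_const_mul (m i)) (measurable_const_mul (m j))
    rw [IndepFun.variance_sum (fun i _ ↦ hmX i) hpair]
    exact Finset.sum_congr rfl fun i _ ↦ variance_const_mul (m i) (X i) μ
  calc ∫ ω, (c + ∑ i, m i * X i ω) ^ 2 ∂μ = μ[(fun ω ↦ c + S ω) ^ 2] := by simp [S, mX]
    _ = Var[fun ω ↦ c + S ω; μ] + μ[fun ω ↦ c + S ω] ^ 2 := by
      rw [variance_eq_sub (X := fun ω ↦ c + S ω) ((memLp_const c).add hS)]
      ring
    _ = c ^ 2 + ∑ i, m i ^ 2 * Var[X i; μ] := by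
      rw [variance_const_add hS.aestronglyMeasurable, integral_add (integrable_const c)
        (hS.integrable one_le_two), hS_mean, hS_var]
      simp only [integral_const, probReal_univ, one_smul, add_zero]
      ring

lemma integral_norm_sq_add_mulVec (hX : ∀ i, MemLp (X i) 2 μ) (hindep : iIndepFun X μ)
    (hmean : ∀ i, μ[X i] = 0) {v : ℝ} (hvar : ∀ i, Var[X i; μ] = v)
    (a : EuclideanSpace ℝ ι) (M : Matrix ι ι ℝ) :
    ∫ ω, ‖a + WithLp.toLp 2 (M *ᵥ fun j ↦ X j ω)‖ ^ 2 ∂μ = ‖a‖ ^ 2 + v * (M * Mᵀ).trace := by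
  have hpt : ∀ ω, ‖a + WithLp.toLp 2 (M *ᵥ fun j ↦ X j ω)‖ ^ 2
      = ∑ i, (a i + ∑ j, M i j * X j ω) ^ 2 := fun ω ↦ by
    simp [EuclideanSpace.real_norm_sq_eq, Matrix.mulVec, dotProduct]
  have hint : ∀ i, Integrable (fun ω ↦ (a i + ∑ j, M i j * X j ω) ^ 2) μ := fun i ↦
    ((memLp_const (a i)).add (memLp_finsetSum _ fun j _ ↦ (hX j).const_mul (M i j))).integrable_sq
  simp only [hpt, integral_finsetSum _ fun i _ ↦ hint i,
    integral_sq_const_add_sum_mul hX hindep hmean, hvar, EuclideanSpace.real_norm_sq_eq,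
    Matrix.trace, Matrix.diag, Matrix.mul_apply, Matrix.transpose_apply,
    Finset.sum_add_distrib, Finset.mul_sum]
  simp only [mul_comm v, sq]

end IndependentCentred

end ProbabilityTheory

namespace Matrix

lemma trace_sub_one_mul_transpose_sub_one {n R : Type*} [Fintype n] [DecidableEq n] [CommRing R]
    {Q : Matrix n n R} (hQ : Q * Qᵀ = 1) : ((Q - 1) * (Q - 1)ᵀ).trace = 2 * (1 - Q).trace := by
  have h : (Q - 1) * (Q - 1)ᵀ = Q * Qᵀ - Q - Qᵀ + 1 := by
    rw [transpose_sub, transpose_one]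
    noncomm_ring
  rw [h, hQ, trace_add, trace_sub, trace_sub, trace_transpose]
  ring

end Matrix

theorem stmt_5_general {Ω : Type*} [MeasurableSpace Ω] (μ : Measure Ω) [IsProbabilityMeasure μ]
    {d : ℕ} (Δt : ℝ≥0) (g : ℝ)
    (a : EuclideanSpace ℝ (Fin d))
    (W : Ω → EuclideanSpace ℝ (Fin d))
    (hindep : iIndepFun
      (fun i ω => W ω i) μ)
    (hlaw : ∀ i : Fin d, Measure.map (fun ω => W ω i) μ = gaussianReal 0 Δt)
    (Q : Matrix (Fin d) (Fin d) ℝ) (hQ : Q * Qᵀ = 1) :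
    (∫ ω, ‖a + g • (WithLp.equiv 2 (Fin d → ℝ)).symm ((Q - 1).mulVec (W ω))‖ ^ 2 ∂μ)
      = ‖a‖ ^ 2 + 2 * g ^ 2 * (Δt : ℝ) * (1 - Q).trace := by
  have hW : ∀ i, HasLaw (fun ω ↦ W ω i) (gaussianReal 0 Δt) μ := fun i ↦ .of_map_eq (hlaw i)
  have hscale : ∀ ω, g • (WithLp.equiv 2 (Fin d → ℝ)).symm ((Q - 1) *ᵥ W ω)
      = WithLp.toLp 2 ((g • (Q - 1)) *ᵥ fun j ↦ W ω j) := fun ω ↦ by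
    rw [smul_mulVec]
    rfl
  simp_rw [hscale]
  rw [integral_norm_sq_add_mulVec (fun i ↦ (hW i).memLp_of_gaussianReal 2) hindep
    (fun i ↦ (hW i).integral_eq_of_gaussianReal) (fun i ↦ (hW i).variance_eq_of_gaussianReal),
    transpose_smul, smul_mul_smul_comm, trace_smul, trace_sub_one_mul_transpose_sub_one hQ]
  simp only [smul_eq_mul]
  ring

/-- Expected one-step increment: for fixed `a ∈ ℝᵈ`, `g ∈ ℝ`, a Gaussian vector `W`
with i.i.d. centered coordinates of variance `Δt`, and orthogonal `Q`,
`E[‖a + g (Q - I) W‖²] = ‖a‖² + 2 g² Δt tr(I - Q)`. -/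
theorem stmt_5 {Ω : Type*} [MeasurableSpace Ω] (μ : Measure Ω) [IsProbabilityMeasure μ]
    {d : ℕ} (hd : 1 ≤ d) (Δt : ℝ≥0) (hΔt : 0 < Δt) (g : ℝ)
    (a : EuclideanSpace ℝ (Fin d))
    (W : Ω → EuclideanSpace ℝ (Fin d))
    (hindep : iIndepFun
      (fun i ω => W ω i) μ)
    (hlaw : ∀ i : Fin d, Measure.map (fun ω => W ω i) μ = gaussianReal 0 Δt)
    (Q : Matrix (Fin d) (Fin d) ℝ) (hQ : Q * Qᵀ = 1) :
    (∫ ω, ‖a + g • (WithLp.equiv 2 (Fin d → ℝ)).symm ((Q - 1).mulVec (W ω))‖ ^ 2 ∂μ)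
      = ‖a‖ ^ 2 + 2 * g ^ 2 * (Δt : ℝ) * (1 - Q).trace :=
  stmt_5_general μ Δt g a W hindep hlaw Q hQ
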